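/- arXiv:math/9703201 — 10 statements merged into one kernel-verified Lean document; each statement's English description precedes it below -/
import Mathlib

section
/- If φ : G → H is a group isomorphism, then the lattice of subgroups of G × H containing the graph Δ_φ of φ is isomorphic (as a lattice) to the lattice of normal subgroups of G. -/
/-- The subgroup of `G × H` generated by the graph of `φ` and a normal subgroup `N` of `G`. -/
def graphUp {G H : Type*} [Group G] [Group H] (φ : G ≃* H) (N : Subgroup G)
    (hN : N.Normal) : Subgroup (G × H) where
  carrier := {p | p.1 * (φ.symm p.2)⁻¹ ∈ N}
  one_mem' := by simpa using N.one_mem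
  mul_mem' := by
    rintro ⟨g1, h1⟩ ⟨g2, h2⟩ ha hb
    simp only [Set.mem_setOf_eq, Prod.fst_mul, Prod.snd_mul, map_mul, mul_inv_rev] at *
    have : g1 * g2 * ((φ.symm h2)⁻¹ * (φ.symm h1)⁻¹) =
        (g1 * (φ.symm h1)⁻¹) * ((φ.symm h1) * (g2 * (φ.symm h2)⁻¹) * (φ.symm h1)⁻¹) := by
      group
    rw [this]
    exact N.mul_mem ha (hN.conj_mem _ hb _)
  inv_mem' := by
    rintro ⟨g, h⟩ ha
    simp only [Set.mem_setOf_eq, Prod.fst_inv, Prod.snd_inv, map_inv, inv_inv] at *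
    have : g⁻¹ * φ.symm h = g⁻¹ * (g * (φ.symm h)⁻¹)⁻¹ * (g⁻¹)⁻¹ := by group
    rw [this]
    exact hN.conj_mem _ (N.inv_mem ha) _

theorem mem_graphUp {G H : Type*} [Group G] [Group H] (φ : G ≃* H) (N : Subgroup G)
    (hN : N.Normal) (p : G × H) :
    p ∈ graphUp φ N hN ↔ p.1 * (φ.symm p.2)⁻¹ ∈ N := Iff.rfl

/-- If `φ : G → H` is an isomorphism, the lattice of subgroups of `G × H` containing the
graph `Δ_φ` of `φ` is order-isomorphic to the lattice of normal subgroups of `G`. -/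
theorem stmt2 {G H : Type*} [Group G] [Group H] (φ : G ≃* H) :
    Nonempty
      ({T : Subgroup (G × H) // ((MonoidHom.id G).prod φ.toMonoidHom).range ≤ T} ≃o
        {N : Subgroup G // N.Normal}) := by
  have hgraph : ∀ (T : Subgroup (G × H)),
      ((MonoidHom.id G).prod φ.toMonoidHom).range ≤ T → ∀ g : G, (g, φ g) ∈ T := by
    intro T hT g
    exact hT ⟨g, rfl⟩
  refine ⟨{
    toFun := fun T => ⟨(T.1).comap (MonoidHom.inl G H), ?_⟩
    invFun := fun N => ⟨graphUp φ N.1 N.2, ?_⟩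
    left_inv := ?_
    right_inv := ?_
    map_rel_iff' := ?_ }⟩
  · constructor
    intro n hn g
    simp only [Subgroup.mem_comap, MonoidHom.inl_apply] at *
    have h1 := hgraph T.1 T.2 g
    have h2 := hgraph T.1 T.2 g⁻¹
    have := T.1.mul_mem (T.1.mul_mem h1 hn) h2
    simpa using this
  · rintro p ⟨g, rfl⟩
    simp only [mem_graphUp]
    simpa using N.1.one_mem
  · rintro ⟨T, hT⟩
    ext ⟨g, h⟩
    simp only [mem_graphUp, Subgroup.mem_comap, MonoidHom.inl_apply]
    constructor
    · intro hm
      have h2 := hgraph T hT (φ.symm h)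
      simp only [MulEquiv.apply_symm_apply] at h2
      have := T.mul_mem hm h2
      simpa using this
    · intro hm
      have h2 := hgraph T hT (φ.symm h)⁻¹
      simp only [map_inv, MulEquiv.apply_symm_apply] at h2
      have := T.mul_mem hm h2
      simpa using this
  · rintro ⟨N, hN⟩
    ext g
    simp [mem_graphUp, Subgroup.mem_comap]
  · rintro ⟨N, hN⟩ ⟨M, hM⟩
    simp only [Equiv.coe_fn_mk, Subtype.mk_le_mk]
    constructor
    · intro hle
      rintro ⟨g, h⟩ hp
      have hgr := hgraph N hN (φ.symm h)
      simp only [MulEquiv.apply_symm_apply] at hgr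
      have h1 : ((g * (φ.symm h)⁻¹, (1:H)) : G × H) ∈ N := by
        have := N.mul_mem hp (N.inv_mem hgr)
        simpa using this
      have h2 : g * (φ.symm h)⁻¹ ∈ M.comap (MonoidHom.inl G H) := hle h1
      have hgr2 := hgraph M hM (φ.symm h)
      simp only [MulEquiv.apply_symm_apply] at hgr2
      have := M.mul_mem (Subgroup.mem_comap.mp h2) hgr2
      simpa using this
    · intro hle g hg
      exact hle hg
end

section
/- If φ : G → H is a group isomorphism, then the graph Δ_φ is a maximal subgroup of G × H if and only if G is a simple group. -/
/-- If `φ : G → H` is an isomorphism, then the graph `Δ_φ = {(g, φ g)}` is a maximal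
subgroup of `G × H` if and only if `G` is simple. -/
theorem stmt3 {G H : Type*} [Group G] [Group H] (φ : G ≃* H) :
    IsCoatom ((MonoidHom.id G).prod φ.toMonoidHom).range ↔ IsSimpleGroup G := by
  have hmem : ∀ p : G × H, p ∈ ((MonoidHom.id G).prod φ.toMonoidHom).range ↔ p.2 = φ p.1 := by
    intro p
    simp only [MonoidHom.mem_range, MonoidHom.prod_apply, MonoidHom.id_apply,
      MulEquiv.coe_toMonoidHom, Prod.ext_iff]
    constructor
    · rintro ⟨g, rfl, h⟩; exact h.symm
    · rintro h; exact ⟨p.1, rfl, h.symm⟩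
  constructor
  · rintro ⟨hne, hmax⟩
    have hnt : Nontrivial G := by
      by_contra hn
      have hsub : Subsingleton G := not_nontrivial_iff_subsingleton.mp hn
      apply hne
      ext p
      simp only [Subgroup.mem_top, iff_true, hmem]
      have h1 : φ.symm p.2 = p.1 := Subsingleton.elim _ _
      rw [← h1, φ.apply_symm_apply]
    refine ⟨fun N hN => ?_⟩
    rcases eq_or_ne N ⊥ with h | h
    · exact Or.inl h
    · right
      obtain ⟨n, hnN, hn1⟩ : ∃ n ∈ N, n ≠ 1 := by
        by_contra hc
        push_neg at hc
        exact h (le_antisymm (fun x hx => hc x hx) bot_le)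
      set K : Subgroup (G × H) :=
        { carrier := {p : G × H | p.1 * (φ.symm p.2)⁻¹ ∈ N}
          one_mem' := by simpa using N.one_mem
          mul_mem' := by
            rintro a b ha hb
            simp only [Set.mem_setOf_eq, Prod.fst_mul, Prod.snd_mul, map_mul] at *
            have key : a.1 * b.1 * (φ.symm a.2 * φ.symm b.2)⁻¹ =
                (a.1 * (φ.symm a.2)⁻¹) *
                ((φ.symm a.2) * (b.1 * (φ.symm b.2)⁻¹) * (φ.symm a.2)⁻¹) := by group
            rw [key]
            exact N.mul_mem ha (hN.conj_mem _ hb _)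
          inv_mem' := by
            rintro a ha
            simp only [Set.mem_setOf_eq, Prod.fst_inv, Prod.snd_inv, map_inv] at *
            have key : a.1⁻¹ * ((φ.symm a.2)⁻¹)⁻¹ =
                a.1⁻¹ * (a.1 * (φ.symm a.2)⁻¹)⁻¹ * a.1⁻¹⁻¹ := by group
            rw [key]
            exact hN.conj_mem _ (N.inv_mem ha) _ } with hKdef
      have hle : ((MonoidHom.id G).prod φ.toMonoidHom).range ≤ K := by
        intro p hp
        have := (hmem p).mp hp
        show p.1 * (φ.symm p.2)⁻¹ ∈ N
        rw [this, φ.symm_apply_apply]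
        simpa using N.one_mem
      have hlt : ((MonoidHom.id G).prod φ.toMonoidHom).range < K := by
        refine lt_of_le_of_ne hle (fun hEq => ?_)
        have hK : (n, (1 : H)) ∈ K := by
          show n * (φ.symm 1)⁻¹ ∈ N
          simpa using hnN
        rw [← hEq] at hK
        have := (hmem _).mp hK
        simp only at this
        exact hn1 (φ.injective (by simpa using this.symm))
      have hKtop := hmax K hlt
      ext g
      simp only [Subgroup.mem_top, iff_true]
      have : (g, (1 : H)) ∈ K := hKtop ▸ Subgroup.mem_top _
      have hg : g * (φ.symm 1)⁻¹ ∈ N := this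
      simpa using hg
  · intro hs
    constructor
    · intro h
      obtain ⟨g, hg⟩ := exists_ne (1 : G)
      have : ((g, (1 : H)) : G × H) ∈ ((MonoidHom.id G).prod φ.toMonoidHom).range := by
        rw [h]; trivial
      have := (hmem _).mp this
      exact hg (φ.injective (by simpa using this.symm))
    · intro K hK
      set N : Subgroup G := K.comap (MonoidHom.inl G H) with hNdef
      have hmemN : ∀ g : G, g ∈ N ↔ ((g, (1 : H)) : G × H) ∈ K := fun g => Iff.rfl
      have hDle : ((MonoidHom.id G).prod φ.toMonoidHom).range ≤ K := hK.le
      have hNnormal : N.Normal := by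
        constructor
        intro n hn g
        rw [hmemN] at hn ⊢
        have hg : ((g, φ g) : G × H) ∈ K := hDle ((hmem _).mpr rfl)
        have := K.mul_mem (K.mul_mem hg hn) (K.inv_mem hg)
        have heq : ((g, φ g) : G × H) * (n, 1) * ((g, φ g) : G × H)⁻¹
            = ((g * n * g⁻¹, (1 : H)) : G × H) := by
          simp [Prod.ext_iff, mul_assoc]
        rwa [heq] at this
      rcases hs.eq_bot_or_eq_top_of_normal N hNnormal with h | h
      · exfalso
        obtain ⟨p, hpK, hpD⟩ := SetLike.exists_of_lt hK
        have h1 : ((φ.symm p.2, p.2) : G × H) ∈ K :=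
          hDle ((hmem _).mpr (φ.apply_symm_apply _).symm)
        have h2 : p * ((φ.symm p.2, p.2) : G × H)⁻¹ ∈ K := K.mul_mem hpK (K.inv_mem h1)
        have h3 : ((p.1 * (φ.symm p.2)⁻¹, (1 : H)) : G × H) ∈ K := by
          have heq : p * ((φ.symm p.2, p.2) : G × H)⁻¹
              = ((p.1 * (φ.symm p.2)⁻¹, (1 : H)) : G × H) := by
            simp [Prod.ext_iff]
          rwa [heq] at h2
        have h4 : p.1 * (φ.symm p.2)⁻¹ ∈ N := (hmemN _).mpr h3
        rw [h] at h4
        have h5 : p.1 = φ.symm p.2 := mul_inv_eq_one.mp (Subgroup.mem_bot.mp h4)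
        apply hpD
        exact (hmem _).mpr (by rw [h5, φ.apply_symm_apply])
      · ext p
        simp only [Subgroup.mem_top, iff_true]
        have h1 : ((φ.symm p.2, p.2) : G × H) ∈ K :=
          hDle ((hmem _).mpr (φ.apply_symm_apply _).symm)
        have h2 : ((p.1 * (φ.symm p.2)⁻¹, (1 : H)) : G × H) ∈ K := by
          rw [← hmemN]; rw [h]; trivial
        have := K.mul_mem h2 h1
        have heq : ((p.1 * (φ.symm p.2)⁻¹, (1 : H)) : G × H) * (φ.symm p.2, p.2) = p := by
          simp [Prod.ext_iff, mul_assoc]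
        rwa [heq] at this
end

section
/- If S is a maximal subgroup of G × H that surjects onto both factors (pr₁(S) = G and pr₂(S) = H), then the quotient G/(S ∩ (G × 1)) is a simple group. -/
open scoped Pointwise

universe u v

/-- If `S` is a maximal subgroup of `G × H` surjecting onto both factors, then
`S₁ = S ∩ (G × 1)` is a normal subgroup of `G` and the quotient `G/S₁` (encoded as
the target of a surjective homomorphism with kernel `S₁`) is a simple group. -/
theorem stmt6 {G : Type u} {H : Type v} [Group G] [Group H] (S : Subgroup (G × H))
    (hS : IsCoatom S) (h1 : S.map (MonoidHom.fst G H) = ⊤)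
    (h2 : S.map (MonoidHom.snd G H) = ⊤) :
    (S.comap (MonoidHom.inl G H)).Normal ∧
      ∃ (Q : Type u) (_ : Group Q) (f : G →* Q), Function.Surjective f ∧
        f.ker = S.comap (MonoidHom.inl G H) ∧ IsSimpleGroup Q := by
  set S₁ := S.comap (MonoidHom.inl G H) with hS₁def
  have hsurj1 : ∀ g : G, ∃ h : H, (g, h) ∈ S := by
    intro g
    have hg : g ∈ S.map (MonoidHom.fst G H) := h1 ▸ Subgroup.mem_top g
    obtain ⟨x, hx, hxe⟩ := hg
    exact ⟨x.2, by simpa [← hxe] using hx⟩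
  have hsurj2 : ∀ h : H, ∃ g : G, (g, h) ∈ S := by
    intro h
    have hg : h ∈ S.map (MonoidHom.snd G H) := h2 ▸ Subgroup.mem_top h
    obtain ⟨x, hx, hxe⟩ := hg
    exact ⟨x.1, by simpa [← hxe] using hx⟩
  have hmem : ∀ x : G, x ∈ S₁ ↔ ((x, 1) : G × H) ∈ S := by
    intro x; rfl
  have hnormal : S₁.Normal := by
    constructor
    intro x hx g
    obtain ⟨h, hgh⟩ := hsurj1 g
    have h2' := S.mul_mem (S.mul_mem hgh ((hmem x).1 hx)) (S.inv_mem hgh)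
    rw [hmem]
    convert h2' using 1
    simp [Prod.ext_iff]
  refine ⟨hnormal, G ⧸ S₁, inferInstance, QuotientGroup.mk' S₁,
    QuotientGroup.mk'_surjective S₁, QuotientGroup.ker_mk' S₁, ?_⟩
  -- S₁ ≠ ⊤
  have hS₁ne : S₁ ≠ ⊤ := by
    intro htop
    apply hS.1
    rw [eq_top_iff]
    rintro ⟨g, h⟩ _
    obtain ⟨g', hg'⟩ := hsurj2 h
    have hgg' : (g * g'⁻¹, (1 : H)) ∈ S := by
      rw [← hmem]; rw [htop]; trivial
    have := S.mul_mem hgg' hg'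
    simpa using this
  have hnt : Nontrivial (G ⧸ S₁) := by
    obtain ⟨g, hg⟩ : ∃ g : G, g ∉ S₁ := by
      by_contra hc
      push_neg at hc
      exact hS₁ne (eq_top_iff.2 fun x _ => hc x)
    exact ⟨QuotientGroup.mk g, 1, fun he => hg ((QuotientGroup.eq_one_iff g).1 he)⟩
  refine ⟨fun N hN => ?_⟩
  by_cases hNbot : N = ⊥
  · exact Or.inl hNbot
  right
  set K := N.comap (QuotientGroup.mk' S₁) with hKdef
  have hKnormal : K.Normal := hN.comap _
  have hS₁K : S₁ ≤ K := by
    intro x hx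
    have : QuotientGroup.mk' S₁ x = 1 := (QuotientGroup.eq_one_iff x).2 hx
    simpa [hKdef, Subgroup.mem_comap, this] using N.one_mem
  -- find k ∈ K, k ∉ S₁
  obtain ⟨k, hkK, hkS₁⟩ : ∃ k, k ∈ K ∧ k ∉ S₁ := by
    by_contra hc
    push_neg at hc
    apply hNbot
    rw [eq_bot_iff]
    intro n hn
    obtain ⟨g, rfl⟩ := QuotientGroup.mk'_surjective S₁ n
    have : g ∈ K := hn
    have hg1 : g ∈ S₁ := hc g this
    simpa [Subgroup.mem_bot] using (QuotientGroup.eq_one_iff g).2 hg1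
  -- K × 1 as a subgroup of G × H
  set K1 := K.map (MonoidHom.inl G H) with hK1def
  have hK1normal : K1.Normal := by
    constructor
    rintro ⟨x, y⟩ hxy ⟨g, h⟩
    obtain ⟨a, ha, hae⟩ := hxy
    obtain ⟨rfl, rfl⟩ : a = x ∧ (1 : H) = y := Prod.mk.injEq .. ▸ Prod.ext_iff.1 hae
    exact ⟨g * a * g⁻¹, hKnormal.conj_mem a ha g, by simp [MonoidHom.inl]⟩
  -- S < S ⊔ K1 so by maximality S ⊔ K1 = ⊤
  have hsup : S ⊔ K1 = ⊤ := by
    apply hS.2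
    rw [lt_iff_le_and_ne]
    refine ⟨le_sup_left, fun he => ?_⟩
    apply hkS₁
    rw [hmem]
    rw [he]
    exact (le_sup_right : K1 ≤ S ⊔ K1) ⟨k, hkK, rfl⟩
  -- deduce K = ⊤
  have hKtop : K = ⊤ := by
    rw [eq_top_iff]
    intro g _
    have hg : ((g, 1) : G × H) ∈ S ⊔ K1 := hsup ▸ Subgroup.mem_top _
    have hg' : ((g, 1) : G × H) ∈ ((S : Set (G × H)) * (K1 : Set (G × H))) := by
      rw [show ((S : Set (G × H)) * (K1 : Set (G × H))) = ((S ⊔ K1 : Subgroup (G × H)) : Set (G × H)) from (Subgroup.mul_normal S K1).symm]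
      exact hg
    obtain ⟨s, hs, n, hn, hmul⟩ := Set.mem_mul.1 hg'
    obtain ⟨a, ha, rfl⟩ := hn
    obtain ⟨he1, he2⟩ := Prod.ext_iff.1 hmul
    simp only [MonoidHom.inl_apply] at he1 he2 ⊢
    -- s = (g * a⁻¹, 1)
    have hs1 : s.1 = g * a⁻¹ := by
      have : s.1 * a = g := he1
      rw [← this, mul_inv_cancel_right]
    have hs2 : s.2 = 1 := by simpa using he2
    have : s.1 ∈ S₁ := by
      rw [hmem]
      have : ((s.1, s.2) : G × H) ∈ S := by simpa using hs
      rwa [hs2] at this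
    have hga : g * a⁻¹ ∈ K := hS₁K (hs1 ▸ this)
    have := K.mul_mem hga ha
    simpa using this
  rw [eq_top_iff]
  intro n _
  obtain ⟨g, rfl⟩ := QuotientGroup.mk'_surjective S₁ n
  have : g ∈ K := hKtop ▸ Subgroup.mem_top g
  exact this
end

section
/- A subgroup S of G × H is normal if and only if the section S̃₁/S₁ is centralized by G (i.e. [G, S̃₁] ≤ S₁) and the section S̃₂/S₂ is centralized by H (i.e. [H, S̃₂] ≤ S₂), where S₁ = S ∩ (G×1), S̃₁ = pr₁(S), S₂ = S ∩ (1×H), S̃₂ = pr₂(S). -/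
open scoped commutatorElement

/-- A subgroup `S ≤ G × H` is normal if and only if `[G, S̃₁] ≤ S₁` and `[H, S̃₂] ≤ S₂`,
where `S₁ = S ∩ (G×1)`, `S̃₁ = pr₁(S)`, `S₂ = S ∩ (1×H)`, `S̃₂ = pr₂(S)`. -/
theorem stmt7 {G H : Type*} [Group G] [Group H] (S : Subgroup (G × H)) :
    S.Normal ↔
      ⁅(⊤ : Subgroup G), S.map (MonoidHom.fst G H)⁆ ≤ S.comap (MonoidHom.inl G H) ∧
      ⁅(⊤ : Subgroup H), S.map (MonoidHom.snd G H)⁆ ≤ S.comap (MonoidHom.inr G H) := by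
  constructor
  · intro hN
    constructor
    · rw [Subgroup.commutator_le]
      rintro g - a ⟨⟨a', b⟩, hab, rfl⟩
      have h1 : ((g, 1) : G × H) * (a', b) * (g, 1)⁻¹ ∈ S := hN.conj_mem _ hab _
      have h2 : (((g, 1) : G × H) * (a', b) * (g, 1)⁻¹) * (a', b)⁻¹ ∈ S :=
        S.mul_mem h1 (S.inv_mem hab)
      simpa [Subgroup.mem_comap, MonoidHom.inl_apply, commutatorElement_def,
        Prod.ext_iff, mul_assoc] using h2
    · rw [Subgroup.commutator_le]
      rintro h - b ⟨⟨a, b'⟩, hab, rfl⟩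
      have h1 : ((1, h) : G × H) * (a, b') * (1, h)⁻¹ ∈ S := hN.conj_mem _ hab _
      have h2 : (((1, h) : G × H) * (a, b') * (1, h)⁻¹) * (a, b')⁻¹ ∈ S :=
        S.mul_mem h1 (S.inv_mem hab)
      simpa [Subgroup.mem_comap, MonoidHom.inr_apply, commutatorElement_def,
        Prod.ext_iff, mul_assoc] using h2
  · rintro ⟨h1, h2⟩
    constructor
    rintro ⟨a, b⟩ hab ⟨g, h⟩
    have hc1 : ((⁅g, a⁆, 1) : G × H) ∈ S := by
      have := h1 (Subgroup.commutator_mem_commutator (Subgroup.mem_top g)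
        ⟨(a, b), hab, rfl⟩)
      simpa [Subgroup.mem_comap, -map_commutatorElement] using this
    have hc2 : ((1, ⁅h, b⁆) : G × H) ∈ S := by
      have := h2 (Subgroup.commutator_mem_commutator (Subgroup.mem_top h)
        ⟨(a, b), hab, rfl⟩)
      simpa [Subgroup.mem_comap, -map_commutatorElement] using this
    have : ((⁅g, a⁆, 1) : G × H) * (1, ⁅h, b⁆) * (a, b) ∈ S :=
      S.mul_mem (S.mul_mem hc1 hc2) hab
    convert this using 1
    simp [commutatorElement_def, Prod.ext_iff, mul_assoc]
end

section
/- If S is a maximal normal subgroup of G × H, then either S = pr₁(S) × pr₂(S) (S is a standard subgroup), or the quotient (G × H)/S is cyclic of prime order. -/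
open scoped commutatorElement

/-- If `S` is a maximal normal subgroup of `G × H`, then either `S = pr₁(S) × pr₂(S)`
(i.e. `S` is standard), or the quotient `(G × H)/S` is cyclic of prime order. -/
theorem stmt9 {G H : Type*} [Group G] [Group H] (S : Subgroup (G × H)) [hS : S.Normal]
    (hne : S ≠ ⊤) (hmax : ∀ T : Subgroup (G × H), T.Normal → S < T → T = ⊤) :
    S = (S.map (MonoidHom.fst G H)).prod (S.map (MonoidHom.snd G H)) ∨
      ∃ p : ℕ, p.Prime ∧ IsCyclic ((G × H) ⧸ S) ∧ Nat.card ((G × H) ⧸ S) = p := by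
  set P := (S.map (MonoidHom.fst G H)).prod (S.map (MonoidHom.snd G H)) with hP
  have hSP : S ≤ P := by
    intro x hx
    exact ⟨⟨x, hx, rfl⟩, ⟨x, hx, rfl⟩⟩
  by_cases hstd : S = P
  · exact Or.inl hstd
  right
  -- P is normal, so by maximality P = ⊤, hence both projections of S are full.
  have hPnormal : P.Normal := by
    have h1 : (S.map (MonoidHom.fst G H)).Normal :=
      hS.map _ (fun g => ⟨(g, 1), rfl⟩)
    have h2 : (S.map (MonoidHom.snd G H)).Normal :=
      hS.map _ (fun h => ⟨(1, h), rfl⟩)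
    exact @Subgroup.prod_normal _ _ _ _ _ _ h1 h2
  have hPtop : P = ⊤ := hmax P hPnormal (lt_of_le_of_ne hSP hstd)
  have hfst : S.map (MonoidHom.fst G H) = ⊤ := by
    rw [eq_top_iff]; intro g _
    have : ((g, (1 : H)) : G × H) ∈ P := hPtop ▸ Subgroup.mem_top _
    exact this.1
  have hsnd : S.map (MonoidHom.snd G H) = ⊤ := by
    rw [eq_top_iff]; intro h _
    have : (((1 : G), h) : G × H) ∈ P := hPtop ▸ Subgroup.mem_top _
    exact this.2
  -- commutators of G land in S (paired with 1), similarly for H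
  have hcomG : ∀ g₁ g₂ : G, ((⁅g₁, g₂⁆, (1 : H)) : G × H) ∈ S := by
    intro g₁ g₂
    obtain ⟨⟨a, b⟩, hab, hfst'⟩ : ∃ x ∈ S, (MonoidHom.fst G H) x = g₂ := by
      have : g₂ ∈ S.map (MonoidHom.fst G H) := hfst ▸ Subgroup.mem_top _
      exact this
    simp only [MonoidHom.coe_fst] at hfst'
    subst hfst'
    have key : ⁅((g₁, (1 : H)) : G × H), (a, b)⁆ ∈ S := by
      rw [commutatorElement_def]
      exact S.mul_mem (hS.conj_mem _ hab _) (S.inv_mem hab)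
    have : (⁅((g₁, (1 : H)) : G × H), (a, b)⁆) = ((⁅g₁, a⁆, (1 : H)) : G × H) := by
      simp [commutatorElement_def, Prod.ext_iff]
    rwa [this] at key
  have hcomH : ∀ h₁ h₂ : H, (((1 : G), ⁅h₁, h₂⁆) : G × H) ∈ S := by
    intro h₁ h₂
    obtain ⟨⟨a, b⟩, hab, hsnd'⟩ : ∃ x ∈ S, (MonoidHom.snd G H) x = h₂ := by
      have : h₂ ∈ S.map (MonoidHom.snd G H) := hsnd ▸ Subgroup.mem_top _
      exact this
    simp only [MonoidHom.coe_snd] at hsnd'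
    subst hsnd'
    have key : ⁅(((1 : G), h₁) : G × H), (a, b)⁆ ∈ S := by
      rw [commutatorElement_def]
      exact S.mul_mem (hS.conj_mem _ hab _) (S.inv_mem hab)
    have : (⁅(((1 : G), h₁) : G × H), (a, b)⁆) = (((1 : G), ⁅h₁, b⁆) : G × H) := by
      simp [commutatorElement_def, Prod.ext_iff]
    rwa [this] at key
  have hcom : ∀ x y : G × H, ⁅x, y⁆ ∈ S := by
    rintro ⟨g₁, h₁⟩ ⟨g₂, h₂⟩
    have : (⁅((g₁, h₁) : G × H), (g₂, h₂)⁆)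
        = ((⁅g₁, g₂⁆, (1 : H)) : G × H) * (((1 : G), ⁅h₁, h₂⁆) : G × H) := by
      simp [commutatorElement_def, Prod.ext_iff]
    rw [this]
    exact S.mul_mem (hcomG g₁ g₂) (hcomH h₁ h₂)
  -- the quotient is an abelian group
  letI : CommGroup ((G × H) ⧸ S) :=
    { (inferInstance : Group ((G × H) ⧸ S)) with
      mul_comm := by
        intro a b
        obtain ⟨x, rfl⟩ := QuotientGroup.mk_surjective a
        obtain ⟨y, rfl⟩ := QuotientGroup.mk_surjective b
        rw [← QuotientGroup.mk_mul, ← QuotientGroup.mk_mul, QuotientGroup.eq_iff_div_mem]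
        have : x * y / (y * x) = ⁅x, y⁆ := by
          simp [commutatorElement_def, div_eq_mul_inv, mul_inv_rev, mul_assoc]
        rw [this]
        exact hcom x y }
  -- the quotient is nontrivial
  have hnontriv : Nontrivial ((G × H) ⧸ S) := by
    obtain ⟨x, hx⟩ : ∃ x : G × H, x ∉ S := by
      by_contra h
      push_neg at h
      exact hne (Subgroup.eq_top_iff' S |>.mpr h)
    exact ⟨(x : (G × H) ⧸ S), 1, fun h => hx ((QuotientGroup.eq_one_iff x).mp h)⟩
  -- the quotient is simple
  haveI : IsSimpleGroup ((G × H) ⧸ S) := by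
    refine ⟨fun N hN => ?_⟩
    set N' := N.comap (QuotientGroup.mk' S) with hN'
    haveI : N'.Normal := hN.comap _
    have hSN' : S ≤ N' := by
      intro s hs
      show (QuotientGroup.mk' S) s ∈ N
      rw [QuotientGroup.mk'_apply, QuotientGroup.eq_one_iff _ |>.mpr hs]
      exact N.one_mem
    rcases eq_or_lt_of_le hSN' with heq | hlt
    · left
      have := Subgroup.map_comap_eq_self_of_surjective
        (QuotientGroup.mk'_surjective S) N
      rw [← this, ← hN', ← heq]
      rw [eq_bot_iff]
      intro y hy
      obtain ⟨s, hs, rfl⟩ := hy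
      rw [Subgroup.mem_bot, QuotientGroup.mk'_apply, QuotientGroup.eq_one_iff]
      exact hs
    · right
      have htop : N' = ⊤ := hmax N' ‹N'.Normal› hlt
      have := Subgroup.map_comap_eq_self_of_surjective
        (QuotientGroup.mk'_surjective S) N
      rw [← this, ← hN', htop]
      exact Subgroup.map_top_of_surjective _ (QuotientGroup.mk'_surjective S)
  -- a simple abelian group is finite
  haveI : Finite ((G × H) ⧸ S) := by
    obtain ⟨g, hg⟩ := IsCyclic.exists_generator (α := (G × H) ⧸ S)
    by_cases hfin : IsOfFinOrder g
    · have : (Subgroup.zpowers g : Set ((G × H) ⧸ S)).Finite := hfin.finite_zpowers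
      have huniv : (Subgroup.zpowers g : Set ((G × H) ⧸ S)) = Set.univ := by
        ext x; simp [hg x]
      rw [huniv] at this
      exact Set.finite_univ_iff.mp this
    · exfalso
      -- zpowers (g^2) is a nontrivial proper subgroup, contradicting simplicity
      have h2 : Subgroup.zpowers (g ^ 2) ≠ ⊥ := by
        rw [Subgroup.zpowers_ne_bot]
        intro h
        exact hfin (isOfFinOrder_iff_pow_eq_one.mpr ⟨2, two_pos, h⟩)
      have h2' : Subgroup.zpowers (g ^ 2) ≠ ⊤ := by
        intro h
        have hgmem : g ∈ Subgroup.zpowers (g ^ 2) := h ▸ Subgroup.mem_top g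
        obtain ⟨k, hk⟩ := hgmem
        simp only [] at hk
        rw [show g ^ 2 = g ^ (2 : ℤ) from (zpow_natCast g 2).symm, ← zpow_mul] at hk
        have : g ^ ((2 : ℤ) * k - 1) = 1 := by
          rw [zpow_sub, hk, zpow_one, mul_inv_cancel]
        have hk0 : (2 : ℤ) * k - 1 ≠ 0 := by omega
        exact hfin ((isOfFinOrder_iff_zpow_eq_one).mpr ⟨_, hk0, this⟩)
      exact h2 ((eq_bot_or_eq_top (Subgroup.zpowers (g ^ 2))).resolve_right h2')
  exact ⟨Nat.card ((G × H) ⧸ S), IsSimpleGroup.prime_card, inferInstance, rfl⟩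
end

section
/- Every maximal normal subgroup of Gⁿ is either standard (a direct product of subgroups of the factors) or has prime index in Gⁿ. -/
open scoped commutatorElement

/-- Every maximal normal subgroup of `Gⁿ` is either standard (a direct product of
subgroups of the factors) or of prime index. -/
theorem stmt10 {G : Type*} [Group G] {n : ℕ} (hn : 1 ≤ n)
    (M : Subgroup (Fin n → G)) (hM : M.Normal) (hne : M ≠ ⊤)
    (hmax : ∀ T : Subgroup (Fin n → G), T.Normal → M < T → T = ⊤) :
    (∃ f : Fin n → Subgroup G, M = Subgroup.pi Set.univ f) ∨
      ∃ p : ℕ, p.Prime ∧ M.index = p := by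
  classical
  set Q := (Fin n → G) ⧸ M with hQ
  set φ : (Fin n → G) →* Q := QuotientGroup.mk' M with hφ
  have hφsurj : Function.Surjective φ := QuotientGroup.mk'_surjective M
  haveI : Nontrivial Q := by
    obtain ⟨g, hg⟩ : ∃ g, g ∉ M := by
      by_contra h
      push_neg at h
      exact hne (Subgroup.eq_top_iff' M |>.2 h)
    exact ⟨φ g, 1, fun h => hg ((QuotientGroup.eq_one_iff g).mp h)⟩
  by_cases hc : ∀ x y : Fin n → G, ⁅x, y⁆ ∈ M
  · -- abelian quotient case: prime index
    right
    letI : CommGroup Q :=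
      { (inferInstance : Group Q) with
        mul_comm := by
          intro a b
          induction a using QuotientGroup.induction_on with | _ x => ?_
          induction b using QuotientGroup.induction_on with | _ y => ?_
          rw [← QuotientGroup.mk_mul, ← QuotientGroup.mk_mul, QuotientGroup.eq]
          have h : (x * y)⁻¹ * (y * x) = ⁅y⁻¹, x⁻¹⁆ := by group
          rw [h]
          exact hc _ _ }
    haveI hsimple : IsSimpleGroup Q := by
      constructor
      intro N hN
      have hcomap : M ≤ N.comap φ := fun m hm => by
        have h1 : φ m = 1 := (QuotientGroup.eq_one_iff m).mpr hm
        show φ m ∈ N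
        rw [h1]
        exact N.one_mem
      rcases eq_or_lt_of_le hcomap with heq | hlt
      · left
        rw [eq_bot_iff]
        intro q hq
        obtain ⟨x, rfl⟩ := hφsurj q
        have : x ∈ N.comap φ := hq
        rw [← heq] at this
        exact (QuotientGroup.eq_one_iff x).mpr this
      · right
        have := hmax _ (Subgroup.Normal.comap hN φ) hlt
        rw [eq_top_iff]
        intro q _
        obtain ⟨x, rfl⟩ := hφsurj q
        have hx : x ∈ N.comap φ := this ▸ Subgroup.mem_top x
        exact hx
    haveI : Finite Q := by
      obtain ⟨g, hg⟩ := IsCyclic.exists_generator (α := Q)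
      by_cases hfin : IsOfFinOrder g
      · haveI : Finite (Subgroup.zpowers g) := hfin.finite_zpowers
        exact Finite.of_surjective (Subtype.val : Subgroup.zpowers g → Q)
          (fun q => ⟨⟨q, hg q⟩, rfl⟩)
      · exfalso
        have hinj : Function.Injective fun m : ℤ => g ^ m :=
          injective_zpow_iff_not_isOfFinOrder.mpr hfin
        have h2 : g ^ (2 : ℤ) ≠ 1 := by
          intro h
          have := hinj (a₁ := 2) (a₂ := 0) (by simpa using h)
          norm_num at this
        rcases IsSimpleOrder.eq_bot_or_eq_top (Subgroup.zpowers (g ^ (2 : ℤ))) with h | h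
        · exact h2 (by simpa [Subgroup.eq_bot_iff_forall] using
            (Subgroup.eq_bot_iff_forall _).mp h (g ^ (2 : ℤ)) (Subgroup.mem_zpowers _))
        · have : g ∈ Subgroup.zpowers (g ^ (2 : ℤ)) := h ▸ Subgroup.mem_top g
          obtain ⟨k, hk⟩ := this
          have he : g ^ (2 * k) = g ^ (1 : ℤ) := by
            rw [zpow_mul]
            simpa using hk
          have := hinj he
          omega
    exact ⟨Nat.card Q, IsSimpleGroup.prime_card, rfl⟩
  · -- nonabelian quotient case: standard
    left
    push_neg at hc
    obtain ⟨x, y, hxy⟩ := hc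
    set Gi : Fin n → Subgroup (Fin n → G) :=
      fun i => (MonoidHom.mulSingle (fun _ : Fin n => G) i).range with hGi
    have hGnorm : ∀ i, (Gi i).Normal := by
      intro i
      constructor
      intro u hu g
      obtain ⟨a, rfl⟩ := hu
      refine ⟨g i * a * (g i)⁻¹, ?_⟩
      funext j
      by_cases h : j = i
      · subst h; simp [MonoidHom.mulSingle_apply]
      · simp [MonoidHom.mulSingle_apply, Pi.mulSingle_eq_of_ne h]
    have hdic : ∀ i, Gi i ≤ M ∨ M ⊔ Gi i = ⊤ := by
      intro i
      by_cases h : Gi i ≤ M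
      · exact Or.inl h
      · right
        haveI := hGnorm i
        exact hmax _ (Subgroup.sup_normal M (Gi i)) (left_lt_sup.mpr h)
    have hmapbot : Subgroup.map φ M = ⊥ := by
      rw [eq_bot_iff]
      rintro q ⟨m, hm, rfl⟩
      exact (QuotientGroup.eq_one_iff m).mpr hm
    have hmaptop : ∀ i, M ⊔ Gi i = ⊤ → Subgroup.map φ (Gi i) = ⊤ := by
      intro i h
      have := congrArg (Subgroup.map φ) h
      rwa [Subgroup.map_sup, hmapbot, bot_sup_eq,
        Subgroup.map_top_of_surjective φ hφsurj] at this
    have habel : ∀ i j, i ≠ j → M ⊔ Gi i = ⊤ → M ⊔ Gi j = ⊤ → False := by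
      intro i j hij hi hj
      have hcomm : ∀ q r : Q, q * r = r * q := by
        intro q r
        have hq : q ∈ Subgroup.map φ (Gi i) := (hmaptop i hi) ▸ Subgroup.mem_top q
        have hr : r ∈ Subgroup.map φ (Gi j) := (hmaptop j hj) ▸ Subgroup.mem_top r
        obtain ⟨u, hu, rfl⟩ := hq
        obtain ⟨v, hv, rfl⟩ := hr
        obtain ⟨a, rfl⟩ := hu
        obtain ⟨b, rfl⟩ := hv
        rw [← map_mul, ← map_mul]
        congr 1
        funext k
        by_cases hk : k = i
        · subst hk
          simp [MonoidHom.mulSingle_apply, Pi.mulSingle_eq_of_ne hij,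
            Pi.mulSingle_eq_same]
        · by_cases hk' : k = j
          · subst hk'
            simp [MonoidHom.mulSingle_apply, Pi.mulSingle_eq_of_ne hk,
              Pi.mulSingle_eq_same]
          · simp [MonoidHom.mulSingle_apply, Pi.mulSingle_eq_of_ne hk,
              Pi.mulSingle_eq_of_ne hk']
      apply hxy
      apply (QuotientGroup.eq_one_iff _).mp
      have : φ ⁅x, y⁆ = ⁅φ x, φ y⁆ := map_commutatorElement φ x y
      rw [show ((⁅x, y⁆ : Fin n → G) : Q) = φ ⁅x, y⁆ from rfl, this]
      exact commutatorElement_eq_one_iff_commute.mpr (hcomm _ _)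
    obtain ⟨i₀, hi₀⟩ : ∃ i, ¬ Gi i ≤ M := by
      by_contra h
      push_neg at h
      apply hne
      rw [eq_top_iff]
      intro z _
      rw [← Finset.noncommProd_mulSingle z]
      exact Subgroup.noncommProd_mem M _ fun j _ => h j ⟨z j, rfl⟩
    have hsup : M ⊔ Gi i₀ = ⊤ := (hdic i₀).resolve_left hi₀
    have hj : ∀ j, j ≠ i₀ → Gi j ≤ M := by
      intro j hji
      refine (hdic j).resolve_right fun hjt => habel i₀ j (Ne.symm hji) hsup hjt
    have key : ∀ z : Fin n → G, z i₀ = 1 → z ∈ M := by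
      intro z hz
      rw [← Finset.noncommProd_mulSingle z]
      refine Subgroup.noncommProd_mem M _ fun j _ => ?_
      rcases eq_or_ne j i₀ with rfl | h
      · rw [hz]; simpa using M.one_mem
      · exact hj j h ⟨z j, rfl⟩
    refine ⟨fun j => if j = i₀ then M.comap (MonoidHom.mulSingle (fun _ : Fin n => G) i₀) else ⊤, ?_⟩
    ext z
    rw [Subgroup.mem_pi]
    have hyz : (Pi.mulSingle i₀ (z i₀))⁻¹ * z ∈ M := by
      apply key
      simp
    constructor
    · intro hzM j _
      by_cases hji : j = i₀
      · subst hji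
        rw [if_pos rfl, Subgroup.mem_comap, MonoidHom.mulSingle_apply]
        have hzz : Pi.mulSingle j (z j) = z * ((Pi.mulSingle j (z j))⁻¹ * z)⁻¹ := by group
        rw [hzz]
        exact M.mul_mem hzM (M.inv_mem hyz)
      · simp [hji]
    · intro hzf
      have h0 := hzf i₀ (Set.mem_univ i₀)
      rw [if_pos rfl, Subgroup.mem_comap, MonoidHom.mulSingle_apply] at h0
      have : z = Pi.mulSingle i₀ (z i₀) * ((Pi.mulSingle i₀ (z i₀))⁻¹ * z) := by group
      rw [this]
      exact M.mul_mem h0 hyz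
end

section
/- A finite group G is perfect if and only if every maximal normal subgroup of Gⁿ is standard, for every n ≥ 1. -/
open scoped Pointwise
open scoped commutatorElement

section Aux

variable {G : Type*} [Group G]

/-- A subgroup containing the commutator subgroup is normal. -/
lemma aux_normal_of_commutator_le {N : Subgroup G} (h : commutator G ≤ N) : N.Normal := by
  constructor
  intro g hg c
  have h1 : ⁅c, g⁆ ∈ N :=
    h (Subgroup.commutator_mem_commutator (Subgroup.mem_top c) (Subgroup.mem_top g))
  have : c * g * c⁻¹ = ⁅c, g⁆ * g := by group
  rw [this]
  exact N.mul_mem h1 hg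

/-- If all coordinate `mulSingle`s of `x` lie in `M`, then so does `x`. -/
lemma aux_mem_of_single_mem {n : ℕ} (M : Subgroup (Fin n → G)) (x : Fin n → G)
    (h : ∀ j, Pi.mulSingle j (x j) ∈ M) : x ∈ M := by
  rw [← Finset.noncommProd_mulSingle x]
  exact M.noncommProd_mem _ (fun j _ => h j)

end Aux

/-- A finite group `G` is perfect if and only if, for every `n ≥ 1`, every maximal
normal subgroup of `Gⁿ` is standard. -/
theorem stmt11 {G : Type*} [Group G] [Finite G] :
    commutator G = ⊤ ↔
      ∀ n : ℕ, 1 ≤ n → ∀ M : Subgroup (Fin n → G), M.Normal → M ≠ ⊤ →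
        (∀ T : Subgroup (Fin n → G), T.Normal → M < T → T = ⊤) →
        ∃ f : Fin n → Subgroup G, M = Subgroup.pi Set.univ f := by
  constructor
  · intro hG n _hn M hMnorm hMne hmax
    classical
    -- the coordinate subgroups
    set Hs : Fin n → Subgroup (Fin n → G) :=
      fun i => (MonoidHom.mulSingle (fun _ : Fin n => G) i).range with hHs
    have hsingle_mem : ∀ (i : Fin n) (g : G), Pi.mulSingle i g ∈ Hs i := fun i g => ⟨g, rfl⟩
    have hnorm : ∀ i, (Hs i).Normal := by
      intro i
      constructor
      rintro x ⟨g, rfl⟩ c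
      refine ⟨c i * g * (c i)⁻¹, ?_⟩
      ext j
      by_cases hj : j = i
      · subst hj; simp
      · simp [Pi.mulSingle_eq_of_ne hj]
    -- Gⁿ is perfect
    have hperf : commutator (Fin n → G) = ⊤ := by
      have := Subgroup.commutator_pi_pi_of_finite (fun _ : Fin n => (⊤ : Subgroup G))
        (fun _ : Fin n => (⊤ : Subgroup G))
      rw [Subgroup.pi_top] at this
      rw [commutator_def, this]
      have : (fun _ : Fin n => ⁅(⊤ : Subgroup G), ⊤⁆) = fun _ : Fin n => (⊤ : Subgroup G) := by
        funext i; rw [← commutator_def, hG]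
      rw [this, Subgroup.pi_top]
    -- Claim A
    have claimA : ∀ i j : Fin n, i ≠ j → Hs i ≤ M ∨ Hs j ≤ M := by
      intro i j hij
      by_contra hcon
      push_neg at hcon
      obtain ⟨hi, hj⟩ := hcon
      haveI := hnorm i
      haveI := hnorm j
      have hti : M ⊔ Hs i = ⊤ := hmax _ inferInstance (left_lt_sup.mpr hi)
      have htj : M ⊔ Hs j = ⊤ := hmax _ inferInstance (left_lt_sup.mpr hj)
      have hle : ⁅M ⊔ Hs i, M ⊔ Hs j⁆ ≤ M := by
        rw [Subgroup.commutator_le]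
        intro a ha b hb
        have ha' := (Set.ext_iff.mp (Subgroup.mul_normal M (Hs i)) a).mp ha
        have hb' := (Set.ext_iff.mp (Subgroup.mul_normal M (Hs j)) b).mp hb
        obtain ⟨m₁, hm₁, h₁, hh₁, rfl⟩ := ha'
        obtain ⟨m₂, hm₂, h₂, hh₂, rfl⟩ := hb'
        -- pass to the quotient
        have hker1 : ∀ x : Fin n → G, x ∈ M → (QuotientGroup.mk' M) x = 1 :=
          fun x hx => (QuotientGroup.eq_one_iff x).mpr hx
        refine (QuotientGroup.eq_one_iff _).mp ?_
        show (QuotientGroup.mk' M) ⁅m₁ * h₁, m₂ * h₂⁆ = 1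
        rw [map_commutatorElement]
        have e₁ : (QuotientGroup.mk' M) (m₁ * h₁) = (QuotientGroup.mk' M) h₁ := by
          rw [map_mul, hker1 m₁ hm₁, one_mul]
        have e₂ : (QuotientGroup.mk' M) (m₂ * h₂) = (QuotientGroup.mk' M) h₂ := by
          rw [map_mul, hker1 m₂ hm₂, one_mul]
        rw [e₁, e₂, commutatorElement_eq_one_iff_commute]
        obtain ⟨g₁, rfl⟩ := hh₁
        obtain ⟨g₂, rfl⟩ := hh₂
        exact (Pi.mulSingle_commute hij g₁ g₂).map (QuotientGroup.mk' M)
      rw [hti, htj, ← commutator_def, hperf, top_le_iff] at hle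
      exact hMne hle
    -- the candidate factors
    refine ⟨fun j => M.comap (MonoidHom.mulSingle (fun _ : Fin n => G) j), ?_⟩
    ext x
    rw [Subgroup.mem_pi]
    constructor
    · intro hx j _
      show Pi.mulSingle j (x j) ∈ M
      by_cases hj : Hs j ≤ M
      · exact hj (hsingle_mem j (x j))
      · have hall : ∀ k, k ≠ j → Hs k ≤ M := fun k hk => (claimA k j hk).resolve_right hj
        set z : Fin n → G := x⁻¹ * Pi.mulSingle j (x j) with hz
        have hzM : z ∈ M := by
          apply aux_mem_of_single_mem
          intro k
          by_cases hk : k = j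
          · subst hk
            have : z k = 1 := by simp [hz]
            rw [this]
            simpa using M.one_mem
          · have : z k = (x k)⁻¹ := by simp [hz, Pi.mulSingle_eq_of_ne hk]
            rw [this]
            exact hall k hk (hsingle_mem k (x k)⁻¹)
        have : Pi.mulSingle j (x j) = x * z := by rw [hz]; group
        rw [this]
        exact M.mul_mem hx hzM
    · intro hx
      exact aux_mem_of_single_mem M x (fun j => hx j (Set.mem_univ j))
  · intro h
    by_contra hG
    classical
    -- find a maximal proper subgroup containing the commutator subgroup
    obtain ⟨N, ⟨hNc, hNne⟩, hNmax⟩ :=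
      Set.Finite.exists_maximalFor id {H : Subgroup G | commutator G ≤ H ∧ H ≠ ⊤}
        (Set.toFinite _) ⟨commutator G, le_refl _, hG⟩
    haveI hNnorm : N.Normal := aux_normal_of_commutator_le hNc
    set φ := QuotientGroup.mk' N with hφ
    -- the quotient is commutative
    have hQcomm : ∀ x y : G ⧸ N, x * y = y * x := by
      intro x y
      induction x using QuotientGroup.induction_on with
      | H a =>
      induction y using QuotientGroup.induction_on with
      | H b =>
      show ((a * b : G) : G ⧸ N) = ((b * a : G) : G ⧸ N)
      rw [QuotientGroup.eq]
      have : (a * b)⁻¹ * (b * a) = ⁅b⁻¹, a⁻¹⁆ := by group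
      rw [this]
      exact hNc (Subgroup.commutator_mem_commutator (Subgroup.mem_top _) (Subgroup.mem_top _))
    -- subgroup dichotomy in the quotient
    have hdich : ∀ P : Subgroup (G ⧸ N), P = ⊥ ∨ P = ⊤ := by
      intro P
      have hker : N ≤ P.comap φ := by
        intro g hg
        have : φ g = 1 := (QuotientGroup.eq_one_iff g).mpr hg
        show φ g ∈ P
        rw [this]; exact P.one_mem
      have hsurj : Function.Surjective φ := QuotientGroup.mk'_surjective N
      by_cases htop : P.comap φ = ⊤
      · right
        rw [← Subgroup.map_comap_eq_self_of_surjective hsurj P, htop,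
          Subgroup.map_top_of_surjective φ hsurj]
      · left
        have hmem : P.comap φ ∈ {H : Subgroup G | commutator G ≤ H ∧ H ≠ ⊤} :=
          ⟨hNc.trans hker, htop⟩
        have hid : id N = id (P.comap φ) := le_antisymm hker (hNmax hmem hker)
        simp only [id_eq] at hid
        rw [← Subgroup.map_comap_eq_self_of_surjective hsurj P, ← hid]
        rw [eq_bot_iff]
        intro q hq
        obtain ⟨g, hg, rfl⟩ := hq
        show φ g ∈ (⊥ : Subgroup (G ⧸ N))
        rw [Subgroup.mem_bot]
        exact (QuotientGroup.eq_one_iff g).mpr hg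
      -- done
    -- pick g outside N
    have : ∃ g : G, g ∉ N := by
      by_contra hc
      push_neg at hc
      exact hNne (Subgroup.eq_top_iff' N |>.mpr hc)
    obtain ⟨g, hg⟩ := this
    have hφg : φ g ≠ 1 := fun hc => hg ((QuotientGroup.eq_one_iff g).mp hc)
    -- the twisted homomorphism
    set ψ : (Fin 2 → G) →* (G ⧸ N) :=
      { toFun := fun x => φ (x 0) * φ (x 1)
        map_one' := by simp
        map_mul' := by
          intro x y
          show φ (x 0 * y 0) * φ (x 1 * y 1) = (φ (x 0) * φ (x 1)) * (φ (y 0) * φ (y 1))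
          rw [map_mul, map_mul]
          rw [mul_assoc, mul_assoc, ← mul_assoc (φ (y 0)), hQcomm (φ (y 0)) (φ (x 1)),
            mul_assoc] } with hψ
    set M := ψ.ker with hM
    have hMne : M ≠ ⊤ := by
      intro hc
      have hx : (fun j : Fin 2 => if j = 0 then g else 1) ∈ M := by rw [hc]; trivial
      have : ψ (fun j : Fin 2 => if j = 0 then g else 1) = φ g := by
        show φ (if (0 : Fin 2) = 0 then g else 1) * φ (if (1 : Fin 2) = 0 then g else 1) = φ g
        norm_num
      rw [MonoidHom.mem_ker, this] at hx
      exact hφg hx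
    have hMmax : ∀ T : Subgroup (Fin 2 → G), T.Normal → M < T → T = ⊤ := by
      intro T _ hMT
      obtain ⟨t, htT, htM⟩ := SetLike.exists_of_lt hMT
      have hPne : T.map ψ ≠ ⊥ := by
        intro hc
        have : ψ t ∈ T.map ψ := ⟨t, htT, rfl⟩
        rw [hc, Subgroup.mem_bot] at this
        exact htM (MonoidHom.mem_ker.mpr this)
      have hPtop : T.map ψ = ⊤ := (hdich _).resolve_left hPne
      have : Subgroup.comap ψ (Subgroup.map ψ T) = T ⊔ ψ.ker := Subgroup.comap_map_eq ψ T
      rw [hPtop, Subgroup.comap_top, sup_of_le_left hMT.le] at this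
      exact this.symm
    obtain ⟨f, hf⟩ := h 2 (by norm_num) M inferInstance hMne hMmax
    -- derive the contradiction
    have hx : (fun j : Fin 2 => if j = 0 then g else g⁻¹) ∈ M := by
      rw [MonoidHom.mem_ker]
      show φ (if (0 : Fin 2) = 0 then g else g⁻¹) * φ (if (1 : Fin 2) = 0 then g else g⁻¹) = 1
      norm_num
    rw [hf, Subgroup.mem_pi] at hx
    have hg0 : g ∈ f 0 := by
      have := hx 0 (Set.mem_univ 0)
      simpa using this
    have hy : (fun j : Fin 2 => if j = 0 then g else 1) ∈ M := by
      rw [hf, Subgroup.mem_pi]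
      intro j _
      by_cases hj : j = 0
      · subst hj; simpa using hg0
      · simp only [hj, if_false]
        exact (f j).one_mem
    rw [MonoidHom.mem_ker] at hy
    have : ψ (fun j : Fin 2 => if j = 0 then g else 1) = φ g := by
      show φ (if (0 : Fin 2) = 0 then g else 1) * φ (if (1 : Fin 2) = 0 then g else 1) = φ g
      norm_num
    rw [this] at hy
    exact hφg hy
end

section
/- If M is a maximal subgroup of Gⁿ with n ≥ 2, then either M is a normal subgroup of prime index in Gⁿ, or M = π⁻¹(S) where π : Gⁿ → G² is the projection onto some pair of distinct coordinates and S is a maximal subgroup of G². -/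
namespace Stmt12Aux

variable {G : Type*} [Group G] {n : ℕ}

/-- The subgroup of functions supported at coordinate `k`. -/
def coord (k : Fin n) : Subgroup (Fin n → G) where
  carrier := {f | ∀ j, j ≠ k → f j = 1}
  one_mem' := fun _ _ => rfl
  mul_mem' := fun {a b} ha hb j hj => by
    simp [Pi.mul_apply, ha j hj, hb j hj]
  inv_mem' := fun {a} ha j hj => by
    simp [Pi.inv_apply, ha j hj]

lemma coord_normal (k : Fin n) : (coord (G := G) k).Normal := by
  constructor
  intro f hf g j hj
  simp [Pi.mul_apply, Pi.inv_apply, hf j hj]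

lemma mulSingle_mem_coord (k : Fin n) (a : G) : Pi.mulSingle k a ∈ coord k := by
  intro j hj
  exact Pi.mulSingle_eq_of_ne (M := fun _ : Fin n => G) hj a

lemma coord_commute {k i : Fin n} (hki : k ≠ i) {u x : Fin n → G}
    (hu : u ∈ coord k) (hx : x ∈ coord i) : u * x = x * u := by
  funext j
  by_cases hj : j = k
  · subst hj
    simp [Pi.mul_apply, hx j hki]
  · simp [Pi.mul_apply, hu j hj]

lemma mem_of_mulSingle_mem (M : Subgroup (Fin n → G)) (f : Fin n → G)
    (h : ∀ k, Pi.mulSingle k (f k) ∈ M) : f ∈ M := by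
  classical
  suffices H : ∀ s : Finset (Fin n), ∀ f : Fin n → G, (∀ k, k ∉ s → f k = 1) →
      (∀ k, Pi.mulSingle k (f k) ∈ M) → f ∈ M by
    exact H Finset.univ f (fun k hk => absurd (Finset.mem_univ k) hk) h
  intro s
  induction s using Finset.induction_on with
  | empty =>
    intro f hf _
    have : f = 1 := funext fun k => hf k (Finset.notMem_empty k)
    rw [this]; exact one_mem M
  | @insert a s ha ih =>
    intro f hf hM2
    have hfg : f = Pi.mulSingle a (f a) * Function.update f a 1 := by
      funext j
      by_cases hj : j = a
      · subst hj
        simp [Pi.mul_apply]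
      · simp [Pi.mul_apply, Pi.mulSingle_eq_of_ne hj, Function.update_of_ne hj]
    rw [hfg]
    refine mul_mem (hM2 a) (ih (Function.update f a 1) ?_ ?_)
    · intro k hk
      by_cases hka : k = a
      · subst hka; simp
      · rw [Function.update_of_ne hka]
        exact hf k (by simp [hka, hk])
    · intro k
      by_cases hka : k = a
      · subst hka; simpa using one_mem M
      · rw [Function.update_of_ne hka]
        exact hM2 k

lemma decompMN {M : Subgroup (Fin n → G)} (hM : IsCoatom M) {k : Fin n}
    (hk : ¬ coord (G := G) k ≤ M) (g : Fin n → G) :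
    ∃ m ∈ M, ∃ w ∈ coord (G := G) k, g = m * w := by
  haveI := coord_normal (G := G) k
  have htop : M ⊔ coord k = ⊤ := hM.2 _ (left_lt_sup.mpr hk)
  have hg : g ∈ (↑(M ⊔ coord (G := G) k) : Set (Fin n → G)) := by
    rw [htop]; trivial
  rw [Subgroup.mul_normal] at hg
  obtain ⟨m, hm, w, hw, hmw⟩ := Set.mem_mul.mp hg
  exact ⟨m, hm, w, hw, hmw.symm⟩

lemma decompNM {M : Subgroup (Fin n → G)} (hM : IsCoatom M) {k : Fin n}
    (hk : ¬ coord (G := G) k ≤ M) (g : Fin n → G) :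
    ∃ w ∈ coord (G := G) k, ∃ m ∈ M, g = w * m := by
  haveI := coord_normal (G := G) k
  have htop : coord (G := G) k ⊔ M = ⊤ := by
    rw [sup_comm]; exact hM.2 _ (left_lt_sup.mpr hk)
  have hg : g ∈ (↑(coord (G := G) k ⊔ M) : Set (Fin n → G)) := by
    rw [htop]; trivial
  rw [Subgroup.normal_mul] at hg
  obtain ⟨w, hw, m, hm, hmw⟩ := Set.mem_mul.mp hg
  exact ⟨w, hw, m, hm, hmw.symm⟩

lemma comm_single_mem {M : Subgroup (Fin n → G)} (hM : IsCoatom M)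
    {t k l : Fin n} (htk : t ≠ k) (htl : t ≠ l) (hkl : k ≠ l)
    (hk : ¬ coord (G := G) k ≤ M) (hl : ¬ coord (G := G) l ≤ M)
    {x y : Fin n → G} (hx : x ∈ coord t) (hy : y ∈ coord t) :
    x * y * x⁻¹ * y⁻¹ ∈ M := by
  obtain ⟨u, hu, c, hc, hxuc⟩ := decompNM hM hk x
  have hconj : ∀ g : Fin n → G, g * c * g⁻¹ ∈ M := by
    intro g
    obtain ⟨m', hm', w, hw, rfl⟩ := decompMN hM hl g
    have hcval : c = u⁻¹ * x := by rw [hxuc]; group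
    have hwc : w * c = c * w := by
      rw [hcval, ← mul_assoc,
        coord_commute (Ne.symm hkl) hw (inv_mem hu), mul_assoc,
        coord_commute (Ne.symm htl) hw hx, mul_assoc]
    have hconjw : w * c * w⁻¹ = c := by rw [hwc]; group
    have : m' * w * c * (m' * w)⁻¹ = m' * (w * c * w⁻¹) * m'⁻¹ := by group
    rw [this, hconjw]
    exact mul_mem (mul_mem hm' hc) (inv_mem hm')
  have huy : u * y = y * u := coord_commute (Ne.symm htk) hu hy
  have hiden : x * y * x⁻¹ * y⁻¹ = (u * c * u⁻¹) * ((u * y) * c⁻¹ * (u * y)⁻¹) := by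
    rw [hxuc]
    have h1 : u⁻¹ * y⁻¹ = y⁻¹ * u⁻¹ := by
      rw [← mul_inv_rev, ← mul_inv_rev, huy]
    simp only [mul_inv_rev, mul_assoc, inv_mul_cancel_left]
    rw [h1]
  rw [hiden]
  have h2 : (u * y) * c⁻¹ * (u * y)⁻¹ = ((u * y) * c * (u * y)⁻¹)⁻¹ := by group
  rw [h2]
  exact mul_mem (hconj u) (inv_mem (hconj _))

end Stmt12Aux

open Stmt12Aux in
/-- If `M` is a maximal subgroup of `Gⁿ` with `n ≥ 2`, then either `M` is a normal
subgroup of prime index, or `M = π⁻¹(S)` for the projection `π : Gⁿ → G²` onto some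
pair of distinct coordinates and some maximal subgroup `S` of `G²`. -/
theorem stmt12 {G : Type*} [Group G] {n : ℕ} (hn : 2 ≤ n)
    (M : Subgroup (Fin n → G)) (hM : IsCoatom M) :
    (M.Normal ∧ ∃ p : ℕ, p.Prime ∧ M.index = p) ∨
      ∃ (i j : Fin n), i ≠ j ∧ ∃ S : Subgroup (G × G), IsCoatom S ∧
        M = S.comap ((Pi.evalMonoidHom (fun _ : Fin n => G) i).prod
          (Pi.evalMonoidHom (fun _ : Fin n => G) j)) := by
  classical
  by_cases hsplit : ∃ i j : Fin n, i ≠ j ∧ ∀ k, k ≠ i → k ≠ j → coord (G := G) k ≤ M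
  · -- second alternative
    right
    obtain ⟨i, j, hij, hgood⟩ := hsplit
    set π : (Fin n → G) →* G × G :=
      (Pi.evalMonoidHom (fun _ : Fin n => G) i).prod
        (Pi.evalMonoidHom (fun _ : Fin n => G) j) with hπ
    have hker : π.ker ≤ M := by
      intro f hf
      have hf1 : f i = 1 ∧ f j = 1 := by
        have : π f = 1 := hf
        rw [hπ] at this
        exact ⟨congrArg Prod.fst this, congrArg Prod.snd this⟩
      apply mem_of_mulSingle_mem
      intro k
      by_cases hki : k = i
      · subst hki; rw [hf1.1]; simpa using one_mem M
      · by_cases hkj : k = j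
        · subst hkj; rw [hf1.2]; simpa using one_mem M
        · exact hgood k hki hkj (mulSingle_mem_coord k (f k))
    have hsurj : Function.Surjective π := by
      rintro ⟨a, b⟩
      refine ⟨Function.update (Function.update (1 : Fin n → G) i a) j b, ?_⟩
      have h1 : (Function.update (Function.update (1 : Fin n → G) i a) j b) i = a := by
        rw [Function.update_of_ne hij, Function.update_self]
      have h2 : (Function.update (Function.update (1 : Fin n → G) i a) j b) j = b :=
        Function.update_self _ _ _
      exact Prod.ext h1 h2
    have hMeq : (M.map π).comap π = M := by
      rw [Subgroup.comap_map_eq, sup_eq_left.mpr hker]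
    refine ⟨i, j, hij, M.map π, ⟨?_, ?_⟩, hMeq.symm⟩
    · intro htop
      apply hM.1
      have := congrArg (Subgroup.comap π) htop
      rwa [hMeq, Subgroup.comap_top] at this
    · intro T hT
      have h1 : M < T.comap π := by
        rw [← hMeq]
        exact Subgroup.comap_lt_comap_of_surjective hsurj |>.mpr hT
      have h2 : T.comap π = ⊤ := hM.2 _ h1
      apply Subgroup.comap_injective hsurj
      rw [h2, Subgroup.comap_top]
  · -- first alternative
    left
    push_neg at hsplit
    have hcase : ∀ i j : Fin n, i ≠ j → ∃ k, k ≠ i ∧ k ≠ j ∧ ¬ coord (G := G) k ≤ M := by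
      intro i j hij
      obtain ⟨k, hk⟩ := hsplit i j hij
      exact ⟨k, hk.1, hk.2.1, hk.2.2⟩
    have hcomm : ∀ f h : Fin n → G, f * h * f⁻¹ * h⁻¹ ∈ M := by
      intro f h
      apply mem_of_mulSingle_mem
      intro t
      have happ : (f * h * f⁻¹ * h⁻¹) t = f t * h t * (f t)⁻¹ * (h t)⁻¹ := rfl
      rw [happ]
      have hsingle : Pi.mulSingle t (f t * h t * (f t)⁻¹ * (h t)⁻¹) =
          (Pi.mulSingle t (f t) : Fin n → G) * Pi.mulSingle t (h t) *
            (Pi.mulSingle t (f t) : Fin n → G)⁻¹ * (Pi.mulSingle t (h t) : Fin n → G)⁻¹ := by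
        funext j
        by_cases hj : j = t
        · subst hj; simp
        · simp [Pi.mulSingle_eq_of_ne (M := fun _ : Fin n => G) hj]
      rw [hsingle]
      have hmf := mulSingle_mem_coord (G := G) t (f t)
      have hmh := mulSingle_mem_coord (G := G) t (h t)
      by_cases hgood : coord (G := G) t ≤ M
      · exact hgood (mul_mem (mul_mem (mul_mem hmf hmh) (inv_mem hmf)) (inv_mem hmh))
      · obtain ⟨j, hjt⟩ : ∃ j : Fin n, j ≠ t := by
          rcases eq_or_ne t ⟨0, by omega⟩ with h0 | h0
          · exact ⟨⟨1, by omega⟩, by rw [h0]; simp [Fin.ext_iff]⟩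
          · exact ⟨⟨0, by omega⟩, Ne.symm h0⟩
        obtain ⟨k, hkt, -, hkbad⟩ := hcase t j (Ne.symm hjt)
        obtain ⟨l, hlt, hlk, hlbad⟩ := hcase t k (Ne.symm hkt)
        exact comm_single_mem hM (Ne.symm hkt) (Ne.symm hlt) (Ne.symm hlk) hkbad hlbad
          hmf hmh
    have hnormal : M.Normal := by
      constructor
      intro m hm g
      have h2 : g * m * g⁻¹ = g * m * g⁻¹ * m⁻¹ * m := by group
      rw [h2]
      exact mul_mem (hcomm g m) hm
    refine ⟨hnormal, ?_⟩
    haveI := hnormal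
    have hmulcomm : ∀ a b : (Fin n → G) ⧸ M, a * b = b * a := by
      intro a b
      obtain ⟨x, rfl⟩ := QuotientGroup.mk'_surjective M a
      obtain ⟨y, rfl⟩ := QuotientGroup.mk'_surjective M b
      rw [← map_mul, ← map_mul]
      show ((x * y : Fin n → G) : (Fin n → G) ⧸ M) = ((y * x : Fin n → G) : _)
      refine (QuotientGroup.eq).mpr ?_
      have heq : (x * y)⁻¹ * (y * x) = y⁻¹ * x⁻¹ * (y⁻¹)⁻¹ * (x⁻¹)⁻¹ := by group
      rw [heq]
      exact hcomm _ _
    letI : CommGroup ((Fin n → G) ⧸ M) :=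
      { (inferInstance : Group ((Fin n → G) ⧸ M)) with mul_comm := hmulcomm }
    haveI hnt : Nontrivial ((Fin n → G) ⧸ M) := by
      obtain ⟨x, hx⟩ : ∃ x, x ∉ M := by
        by_contra hcon
        push_neg at hcon
        exact hM.1 (((Subgroup.eq_top_iff' M).mpr hcon))
      exact ⟨(x : (Fin n → G) ⧸ M), 1,
        fun hcon => hx ((QuotientGroup.eq_one_iff x).mp hcon)⟩
    haveI hsimple : IsSimpleGroup ((Fin n → G) ⧸ M) := by
      constructor
      intro H _
      have hMle : M ≤ H.comap (QuotientGroup.mk' M) := by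
        intro g hg
        show QuotientGroup.mk' M g ∈ H
        have h1 : QuotientGroup.mk' M g = 1 := (QuotientGroup.eq_one_iff g).mpr hg
        rw [h1]; exact one_mem H
      rcases eq_or_lt_of_le hMle with heq | hlt
      · left
        rw [eq_bot_iff]
        intro q hq
        obtain ⟨g, rfl⟩ := QuotientGroup.mk'_surjective M q
        have hgM : g ∈ M := by rw [heq]; exact hq
        exact Subgroup.mem_bot.mpr ((QuotientGroup.eq_one_iff g).mpr hgM)
      · right
        have h2 : H.comap (QuotientGroup.mk' M) = ⊤ := hM.2 _ hlt
        rw [eq_top_iff]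
        intro q _
        obtain ⟨g, rfl⟩ := QuotientGroup.mk'_surjective M q
        have : g ∈ H.comap (QuotientGroup.mk' M) := by rw [h2]; trivial
        exact this
    haveI hfin : Finite ((Fin n → G) ⧸ M) := by
      obtain ⟨g, hg⟩ := IsCyclic.exists_generator (α := (Fin n → G) ⧸ M)
      have hord : IsOfFinOrder g := by
        rcases IsSimpleGroup.eq_bot_or_eq_top_of_normal (Subgroup.zpowers (g * g))
          (Subgroup.normal_of_comm _) with hbot | htop
        · have hmem := Subgroup.mem_zpowers (g * g)
          rw [hbot] at hmem
          have h2 : g * g = 1 := Subgroup.mem_bot.mp hmem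
          exact isOfFinOrder_iff_zpow_eq_one.mpr ⟨2, two_ne_zero, by
            rw [show (2 : ℤ) = 1 + 1 from rfl, zpow_add, zpow_one, h2]⟩
        · have hgmem : g ∈ Subgroup.zpowers (g * g) := by rw [htop]; trivial
          obtain ⟨kk, hkk⟩ := Subgroup.mem_zpowers_iff.mp hgmem
          refine isOfFinOrder_iff_zpow_eq_one.mpr ⟨2 * kk - 1, by omega, ?_⟩
          have hgg : g ^ (2 : ℤ) = g * g := by
            rw [show (2 : ℤ) = 1 + 1 from rfl, zpow_add, zpow_one]
          calc g ^ (2 * kk - 1) = g ^ (2 * kk) * g⁻¹ := by rw [zpow_sub, zpow_one]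
            _ = (g ^ (2 : ℤ)) ^ kk * g⁻¹ := by rw [zpow_mul]
            _ = (g * g) ^ kk * g⁻¹ := by rw [hgg]
            _ = g * g⁻¹ := by rw [hkk]
            _ = 1 := by group
      have htop : Subgroup.zpowers g = ⊤ := by
        rw [eq_top_iff]; intro q _; exact hg q
      have huniv : (Subgroup.zpowers g : Set ((Fin n → G) ⧸ M)) = Set.univ := by
        rw [htop]; rfl
      exact Set.finite_univ_iff.mp (huniv ▸ finite_zpowers.mpr hord)
    exact ⟨Nat.card ((Fin n → G) ⧸ M), IsSimpleGroup.prime_card, rfl⟩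
end

section
/- If G is a perfect group, then every maximal subgroup of Gⁿ is the preimage of a maximal subgroup of G² under a projection Gⁿ → G² onto two distinct coordinates. -/
section Aux

variable {A B : Type*} [Group A] [Group B]

/-- Pushing a coatom forward along a surjective hom whose kernel it contains gives a coatom. -/
lemma aux_map_coatom (φ : A →* B) (hφ : Function.Surjective φ) {M : Subgroup A}
    (hker : φ.ker ≤ M) (hM : IsCoatom M) : IsCoatom (M.map φ) := by
  have hcm : (M.map φ).comap φ = M := by
    rw [Subgroup.comap_map_eq, sup_eq_left.mpr hker]
  constructor
  · intro h
    apply hM.1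
    rw [← hcm, h, Subgroup.comap_top]
  · intro S' hS'
    have hle : M ≤ S'.comap φ := hcm ▸ Subgroup.comap_mono hS'.le
    have hlt : M < S'.comap φ := by
      rcases hle.lt_or_eq with h | h
      · exact h
      · exfalso
        have := Subgroup.map_comap_eq_self_of_surjective hφ S'
        rw [← h] at this
        exact hS'.ne this
    have htop : S'.comap φ = ⊤ := hM.2 _ hlt
    have := Subgroup.map_comap_eq_self_of_surjective hφ S'
    rw [htop, Subgroup.map_top_of_surjective _ hφ] at this
    exact this.symm

end Aux

section CaseB

variable {G : Type*} [Group G]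

private lemma conj_mulSingle {n : ℕ} (t : Fin n) (y : Fin n → G) (a : G) :
    y * Pi.mulSingle t a * y⁻¹ = Pi.mulSingle t (y t * a * (y t)⁻¹) := by
  funext s
  rcases eq_or_ne s t with rfl | hs
  · simp
  · simp [Pi.mulSingle_eq_of_ne hs]

/-- Key lemma for the case where all coordinate projections of `M` are surjective:
given a coordinate `i` whose "slice" is not contained in `M`, among any two other distinct
coordinates, at least one has its whole slice inside `M`. -/
lemma caseB_aux (hG : commutator G = ⊤) {n : ℕ}
    (M : Subgroup (Fin n → G)) (hM : IsCoatom M)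
    (hsurj : ∀ (t : Fin n) (g : G), ∃ m ∈ M, m t = g)
    (i : Fin n) (hKi : ¬ ∀ g : G, Pi.mulSingle i g ∈ M)
    (k l : Fin n) (hk : k ≠ i) (hl : l ≠ i) (hkl : k ≠ l) :
    (∀ g : G, Pi.mulSingle k g ∈ M) ∨ (∀ g : G, Pi.mulSingle l g ∈ M) := by
  classical
  set Ki : Subgroup G := M.comap (MonoidHom.mulSingle (fun _ : Fin n => G) i) with hKidef
  have hKimem : ∀ g : G, g ∈ Ki ↔ Pi.mulSingle i g ∈ M := by
    intro g
    rw [hKidef, Subgroup.mem_comap, MonoidHom.mulSingle_apply]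
  haveI hKiN : Ki.Normal := by
    constructor
    intro a ha g
    obtain ⟨m, hm, hmi⟩ := hsurj i g
    have h2 : m * Pi.mulSingle i a * m⁻¹ ∈ M :=
      mul_mem (mul_mem hm ((hKimem a).mp ha)) (inv_mem hm)
    rw [conj_mulSingle i m a, hmi] at h2
    exact (hKimem _).mpr h2
  -- every element agrees with some element of M away from coordinate i
  have hS : ∀ x : Fin n → G, ∃ m ∈ M, ∀ t, t ≠ i → m t = x t := by
    intro x
    set Gi : Subgroup (Fin n → G) := (MonoidHom.mulSingle (fun _ : Fin n => G) i).range
      with hGidef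
    haveI : Gi.Normal := by
      constructor
      rintro a ⟨b, rfl⟩ y
      refine ⟨y i * b * (y i)⁻¹, ?_⟩
      rw [MonoidHom.mulSingle_apply, MonoidHom.mulSingle_apply, ← conj_mulSingle]
    have hGiM : ¬ Gi ≤ M := by
      intro h
      exact hKi fun g => h ⟨g, by rw [MonoidHom.mulSingle_apply]⟩
    have hsup : M ⊔ Gi = ⊤ := by
      rcases (le_sup_left : M ≤ M ⊔ Gi).lt_or_eq with hlt | he
      · exact hM.2 _ hlt
      · exact absurd (le_sup_right.trans he.symm.le) hGiM
    have hx : x ∈ ((M ⊔ Gi : Subgroup (Fin n → G)) : Set (Fin n → G)) := by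
      rw [hsup]; trivial
    rw [Subgroup.mul_normal M Gi] at hx
    obtain ⟨m, hm, h, hh, rfl⟩ := hx
    obtain ⟨b, rfl⟩ := hh
    refine ⟨m, hm, fun t ht => ?_⟩
    rw [MonoidHom.mulSingle_apply]
    simp [Pi.mulSingle_eq_of_ne ht]
  -- well-definedness of the "cocycle" value
  have hwd : ∀ (x : Fin n → G), ∀ m ∈ M, ∀ m' ∈ M, (∀ t, t ≠ i → m t = x t) →
      (∀ t, t ≠ i → m' t = x t) →
      (QuotientGroup.mk (m i) : G ⧸ Ki) = QuotientGroup.mk (m' i) := by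
    intro x m hm m' hm' hme hm'e
    have hd : m'⁻¹ * m ∈ M := mul_mem (inv_mem hm') hm
    have heq : m'⁻¹ * m = Pi.mulSingle i ((m'⁻¹ * m) i) := by
      funext t
      rcases eq_or_ne t i with rfl | ht
      · simp
      · simp [Pi.mulSingle_eq_of_ne ht, hme t ht, hm'e t ht]
    have hdi : (m'⁻¹ * m) i ∈ Ki := (hKimem _).mpr (heq ▸ hd)
    have hmi : m i = m' i * ((m'⁻¹ * m) i) := by
      simp [mul_assoc]
    rw [hmi, QuotientGroup.mk_mul, (QuotientGroup.eq_one_iff _).mpr hdi, mul_one]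
  choose sel hselM hsel using hS
  set cfun : (Fin n → G) → G ⧸ Ki := fun x => QuotientGroup.mk (sel x i) with hcfun
  have cspec : ∀ x, ∀ m ∈ M, (∀ t, t ≠ i → m t = x t) → cfun x = QuotientGroup.mk (m i) :=
    fun x m hm hme => hwd x (sel x) (hselM x) m hm (hsel x) hme
  have cmul : ∀ x y, cfun (x * y) = cfun x * cfun y := by
    intro x y
    rw [cspec (x * y) (sel x * sel y) (mul_mem (hselM x) (hselM y))
      (fun t ht => by simp [hsel x t ht, hsel y t ht])]
    rw [Pi.mul_apply, QuotientGroup.mk_mul]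
  have cM : ∀ m ∈ M, cfun m = QuotientGroup.mk (m i) :=
    fun m hm => cspec m m hm fun _ _ => rfl
  have c1 : cfun 1 = 1 := by
    rw [cM 1 M.one_mem, Pi.one_apply, QuotientGroup.mk_one]
  have cinv : ∀ x, cfun x⁻¹ = (cfun x)⁻¹ := by
    intro x
    refine eq_inv_of_mul_eq_one_left ?_
    rw [← cmul, inv_mul_cancel, c1]
  have cmem : ∀ x, x ∈ M ↔ cfun x = QuotientGroup.mk (x i) := by
    intro x
    constructor
    · exact cM x
    · intro h
      have hKmem : (sel x i)⁻¹ * x i ∈ Ki := by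
        rw [← QuotientGroup.eq_one_iff, QuotientGroup.mk_mul, QuotientGroup.mk_inv,
          show ((sel x i : G) : G ⧸ Ki) = ↑(x i) from h, inv_mul_cancel]
      have hxeq : x = sel x * Pi.mulSingle i ((sel x i)⁻¹ * x i) := by
        funext t
        rcases eq_or_ne t i with rfl | ht
        · simp
        · simp [Pi.mulSingle_eq_of_ne ht, hsel x t ht]
      rw [hxeq]
      exact mul_mem (hselM x) ((hKimem _).mp hKmem)
  have csurj : ∀ q : G ⧸ Ki, ∃ x, x ∈ M ∧ cfun x = q := by
    intro q
    obtain ⟨g, rfl⟩ := QuotientGroup.mk_surjective q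
    obtain ⟨m, hm, hmi⟩ := hsurj i g
    exact ⟨m, hm, by rw [cM m hm, hmi]⟩
  have csingle_i : ∀ g : G, cfun (Pi.mulSingle i g) = 1 := by
    intro g
    rw [cspec _ 1 M.one_mem fun t ht => by simp [Pi.mulSingle_eq_of_ne ht]]
    simp
  -- simplicity of the quotient
  have hsimple : ∀ H : Subgroup (G ⧸ Ki), H.Normal → H = ⊥ ∨ H = ⊤ := by
    intro H hH
    set T : Subgroup (Fin n → G) :=
      { carrier := {x | (QuotientGroup.mk (x i) : G ⧸ Ki) * (cfun x)⁻¹ ∈ H}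
        one_mem' := by
          simp only [Set.mem_setOf_eq, Pi.one_apply, QuotientGroup.mk_one, c1, inv_one, mul_one]
          exact H.one_mem
        mul_mem' := by
          intro a b ha hb
          simp only [Set.mem_setOf_eq] at ha hb ⊢
          rw [cmul, Pi.mul_apply, QuotientGroup.mk_mul, mul_inv_rev]
          have key : (QuotientGroup.mk (a i) : G ⧸ Ki) * QuotientGroup.mk (b i) *
              ((cfun b)⁻¹ * (cfun a)⁻¹) =
              (QuotientGroup.mk (a i) * (cfun a)⁻¹) *
                (cfun a * (QuotientGroup.mk (b i) * (cfun b)⁻¹) * (cfun a)⁻¹) := by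
            group
          rw [key]
          exact mul_mem ha (hH.conj_mem _ hb (cfun a))
        inv_mem' := by
          intro x hx
          simp only [Set.mem_setOf_eq] at hx ⊢
          rw [cinv, inv_inv, Pi.inv_apply, QuotientGroup.mk_inv]
          have key : (QuotientGroup.mk (x i) : G ⧸ Ki)⁻¹ * cfun x =
              (QuotientGroup.mk (x i))⁻¹ * (QuotientGroup.mk (x i) * (cfun x)⁻¹)⁻¹ *
                ((QuotientGroup.mk (x i))⁻¹)⁻¹ := by
            group
          rw [key]
          exact hH.conj_mem _ (inv_mem hx) _ } with hT
    have hMT : M ≤ T := by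
      intro m hm
      show (QuotientGroup.mk (m i) : G ⧸ Ki) * (cfun m)⁻¹ ∈ H
      rw [cM m hm]
      simp only [mul_inv_cancel]
      exact H.one_mem
    rcases hMT.lt_or_eq with hlt | he
    · right
      have hTtop : T = ⊤ := hM.2 T hlt
      rw [eq_top_iff]
      rintro q -
      obtain ⟨g, rfl⟩ := QuotientGroup.mk_surjective q
      have hmem : Pi.mulSingle i g ∈ T := by rw [hTtop]; trivial
      have h2 : (QuotientGroup.mk ((Pi.mulSingle i g : Fin n → G) i) : G ⧸ Ki) *
          (cfun (Pi.mulSingle i g))⁻¹ ∈ H := hmem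
      rwa [csingle_i, inv_one, mul_one, Pi.mulSingle_eq_same] at h2
    · left
      rw [eq_bot_iff]
      intro q hq
      obtain ⟨g, rfl⟩ := QuotientGroup.mk_surjective q
      have hxT : Pi.mulSingle i g ∈ T := by
        show (QuotientGroup.mk ((Pi.mulSingle i g : Fin n → G) i) : G ⧸ Ki) *
          (cfun (Pi.mulSingle i g))⁻¹ ∈ H
        rwa [csingle_i, inv_one, mul_one, Pi.mulSingle_eq_same]
      have hxM : Pi.mulSingle i g ∈ M := he ▸ hxT
      have hgKi : g ∈ Ki := (hKimem g).mpr hxM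
      simpa [Subgroup.mem_bot] using (QuotientGroup.eq_one_iff g).mpr hgKi
  -- the quotient is nontrivial
  have hQnt : ∃ q : G ⧸ Ki, q ≠ 1 := by
    have hg : ∃ g, g ∉ Ki := by
      by_contra h
      push_neg at h
      exact hKi fun g => (hKimem g).mp (h g)
    obtain ⟨g, hg⟩ := hg
    exact ⟨QuotientGroup.mk g, fun h => hg ((QuotientGroup.eq_one_iff g).mp h)⟩
  -- the quotient is perfect
  have hQperf : commutator (G ⧸ Ki) = ⊤ := by
    have hmap : Subgroup.map (QuotientGroup.mk' Ki) ⊤ = ⊤ :=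
      Subgroup.map_top_of_surjective _ (QuotientGroup.mk'_surjective Ki)
    rw [commutator, ← hmap, ← Subgroup.map_commutator, ← commutator, hG, hmap]
  -- the subgroup hom C and the slices A_t
  set C : (Fin n → G) →* G ⧸ Ki := MonoidHom.mk' cfun cmul with hC
  have hCval : ∀ x, C x = cfun x := fun _ => rfl
  set Ak : Fin n → Subgroup (G ⧸ Ki) :=
    fun t => (C.comp (MonoidHom.mulSingle (fun _ : Fin n => G) t)).range with hAk
  have hAmem : ∀ t q, q ∈ Ak t ↔ ∃ g : G, cfun (Pi.mulSingle t g) = q := by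
    intro t q
    constructor
    · rintro ⟨g, rfl⟩
      exact ⟨g, by rw [MonoidHom.comp_apply, MonoidHom.mulSingle_apply, hCval]⟩
    · rintro ⟨g, rfl⟩
      exact ⟨g, by rw [MonoidHom.comp_apply, MonoidHom.mulSingle_apply, hCval]⟩
  have hAnormal : ∀ t : Fin n, (Ak t).Normal := by
    intro t
    constructor
    intro a ha q
    obtain ⟨b, hb⟩ := (hAmem t a).mp ha
    obtain ⟨y, hyM, hy⟩ := csurj q
    refine (hAmem t _).mpr ⟨y t * b * (y t)⁻¹, ?_⟩
    rw [← conj_mulSingle t y b, cmul, cmul, cinv, hb, hy]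
  -- final dichotomy
  have hbot : ∀ t : Fin n, t ≠ i → Ak t = ⊥ → ∀ g : G, Pi.mulSingle t g ∈ M := by
    intro t ht hbt g
    have : cfun (Pi.mulSingle t g) ∈ Ak t := (hAmem t _).mpr ⟨g, rfl⟩
    rw [hbt, Subgroup.mem_bot] at this
    rw [cmem, this, Pi.mulSingle_eq_of_ne (Ne.symm ht), QuotientGroup.mk_one]
  rcases hsimple (Ak k) (hAnormal k) with hbk | htk
  · exact Or.inl (hbot k hk hbk)
  rcases hsimple (Ak l) (hAnormal l) with hbl | htl
  · exact Or.inr (hbot l hl hbl)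
  -- both slices full: the quotient is abelian, contradiction with perfect + nontrivial
  exfalso
  have hab : ∀ q r : G ⧸ Ki, q * r = r * q := by
    intro q r
    obtain ⟨a, ha⟩ := (hAmem k q).mp (htk ▸ Subgroup.mem_top q)
    obtain ⟨b, hb⟩ := (hAmem l r).mp (htl ▸ Subgroup.mem_top r)
    have hcomm : (Pi.mulSingle k a : Fin n → G) * Pi.mulSingle l b = Pi.mulSingle l b * Pi.mulSingle k a := by
      funext s
      rcases eq_or_ne s k with rfl | hsk
      · simp [Pi.mulSingle_eq_of_ne hkl]
      · rcases eq_or_ne s l with rfl | hsl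
        · simp [Pi.mulSingle_eq_of_ne (Ne.symm hkl)]
        · simp [Pi.mulSingle_eq_of_ne hsk, Pi.mulSingle_eq_of_ne hsl]
    rw [← ha, ← hb, ← cmul, ← cmul, hcomm]
  obtain ⟨q, hq⟩ := hQnt
  apply hq
  have hle : (⊤ : Subgroup (G ⧸ Ki)) ≤ ⊥ := by
    rw [← hQperf, commutator]
    refine Subgroup.commutator_le.mpr fun g1 _ g2 _ => ?_
    rw [Subgroup.mem_bot]
    exact commutatorElement_eq_one_iff_commute.mpr (hab g1 g2)
  simpa [Subgroup.mem_bot] using hle (Subgroup.mem_top q)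

end CaseB

/-- If `G` is perfect, every maximal subgroup of `Gⁿ` (`n ≥ 2`) is the preimage of a
maximal subgroup of `G²` under the projection onto some pair of distinct coordinates. -/
theorem stmt13 {G : Type*} [Group G] (hG : commutator G = ⊤) {n : ℕ} (hn : 2 ≤ n)
    (M : Subgroup (Fin n → G)) (hM : IsCoatom M) :
    ∃ (i j : Fin n), i ≠ j ∧ ∃ S : Subgroup (G × G), IsCoatom S ∧
      M = S.comap ((Pi.evalMonoidHom (fun _ : Fin n => G) i).prod
        (Pi.evalMonoidHom (fun _ : Fin n => G) j)) := by
  classical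
  haveI : Nontrivial (Fin n) := Fin.nontrivial_iff_two_le.mpr hn
  suffices h : ∃ i j : Fin n, i ≠ j ∧
      (((Pi.evalMonoidHom (fun _ : Fin n => G) i).prod
        (Pi.evalMonoidHom (fun _ : Fin n => G) j)).ker ≤ M) by
    obtain ⟨i, j, hij, hker⟩ := h
    set φ := (Pi.evalMonoidHom (fun _ : Fin n => G) i).prod
      (Pi.evalMonoidHom (fun _ : Fin n => G) j) with hφdef
    have hφ : Function.Surjective φ := by
      rintro ⟨a, b⟩
      refine ⟨fun t => if t = i then a else if t = j then b else 1, ?_⟩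
      have hji : j ≠ i := Ne.symm hij
      simp only [hφdef, MonoidHom.prod_apply, Pi.evalMonoidHom_apply]
      simp [hji]
    refine ⟨i, j, hij, M.map φ, aux_map_coatom φ hφ hker hM, ?_⟩
    rw [Subgroup.comap_map_eq, sup_eq_left.mpr hker]
  have hkermem : ∀ (i j : Fin n) (x : Fin n → G),
      x ∈ ((Pi.evalMonoidHom (fun _ : Fin n => G) i).prod
        (Pi.evalMonoidHom (fun _ : Fin n => G) j)).ker ↔ x i = 1 ∧ x j = 1 := by
    intro i j x
    rw [MonoidHom.mem_ker, MonoidHom.prod_apply, Pi.evalMonoidHom_apply, Pi.evalMonoidHom_apply,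
      Prod.mk_eq_one]
  by_cases hA : ∀ i : Fin n, M.map (Pi.evalMonoidHom (fun _ : Fin n => G) i) = ⊤
  · -- all projections surjective
    have hsurj : ∀ (t : Fin n) (g : G), ∃ m ∈ M, m t = g := by
      intro t g
      have : g ∈ M.map (Pi.evalMonoidHom (fun _ : Fin n => G) t) := by rw [hA t]; trivial
      obtain ⟨m, hm, hmt⟩ := this
      exact ⟨m, hm, hmt⟩
    obtain ⟨i, hKi⟩ : ∃ i : Fin n, ¬ ∀ g : G, Pi.mulSingle i g ∈ M := by
      by_contra h
      push_neg at h
      apply hM.1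
      rw [eq_top_iff]
      intro x _
      rw [← Finset.noncommProd_mulSingle x]
      exact M.noncommProd_mem _ fun t _ => h t (x t)
    have hfinish : ∀ j : Fin n, j ≠ i →
        (∀ t : Fin n, t ≠ i → t ≠ j → ∀ g : G, Pi.mulSingle t g ∈ M) →
        ∃ i' j' : Fin n, i' ≠ j' ∧
          (((Pi.evalMonoidHom (fun _ : Fin n => G) i').prod
            (Pi.evalMonoidHom (fun _ : Fin n => G) j')).ker ≤ M) := by
      intro j hj hrest
      refine ⟨i, j, Ne.symm hj, ?_⟩
      intro x hx
      obtain ⟨hxi, hxj⟩ := (hkermem i j x).mp hx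
      rw [← Finset.noncommProd_mulSingle x]
      refine M.noncommProd_mem _ fun t _ => ?_
      rcases eq_or_ne t i with rfl | hti
      · rw [hxi, Pi.mulSingle_one]
        exact M.one_mem
      rcases eq_or_ne t j with rfl | htj
      · rw [hxj, Pi.mulSingle_one]
        exact M.one_mem
      exact hrest t hti htj (x t)
    by_cases hrest : ∀ t : Fin n, t ≠ i → ∀ g : G, Pi.mulSingle t g ∈ M
    · obtain ⟨j, hj⟩ := exists_ne i
      exact hfinish j hj fun t ht _ g => hrest t ht g
    · push_neg at hrest
      obtain ⟨j, hj, g0, hg0⟩ := hrest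
      refine hfinish j hj fun t ht htj g => ?_
      rcases caseB_aux hG M hM hsurj i hKi t j ht hj htj with h | h
      · exact h g
      · exact absurd (h g0) hg0
  · -- some projection not surjective
    push_neg at hA
    obtain ⟨i, hi⟩ := hA
    obtain ⟨j, hj⟩ := exists_ne i
    refine ⟨i, j, Ne.symm hj, ?_⟩
    set X : Subgroup (Fin n → G) :=
      (M.map (Pi.evalMonoidHom (fun _ : Fin n => G) i)).comap
        (Pi.evalMonoidHom (fun _ : Fin n => G) i) with hX
    have hle : M ≤ X := Subgroup.le_comap_map _ M
    have hne : X ≠ ⊤ := by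
      intro h
      apply hi
      rw [eq_top_iff]
      intro g _
      have : (fun _ => g : Fin n → G) ∈ X := by rw [h]; trivial
      simpa [hX] using this
    have hXM : X = M := by
      rcases hle.lt_or_eq with hlt | he
      · exact absurd (hM.2 _ hlt) hne
      · exact he.symm
    intro x hx
    obtain ⟨hxi, -⟩ := (hkermem i j x).mp hx
    rw [← hXM]
    refine Subgroup.mem_comap.mpr ?_
    rw [Pi.evalMonoidHom_apply, hxi]
    exact Subgroup.one_mem _
end

section
/- For a finite group G, if k is large enough (specifically if 2^k ≥ 2r where r is the number of maximal subgroups of G), then the number of k-tuples of elements of G that generate G is at least |G|^k / 2. -/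
/-- For a finite group `G` with `r` maximal subgroups and `k` with `2r ≤ 2^k`, the
number of generating `k`-tuples of `G` is at least `|G|^k / 2`. -/
theorem stmt18 {G : Type*} [Group G] [Finite G] (k : ℕ)
    (hk : 2 * Nat.card {M : Subgroup G // IsCoatom M} ≤ 2 ^ k) :
    ((Nat.card G : ℝ) ^ k) / 2 ≤
      (Nat.card {x : Fin k → G // Subgroup.closure (Set.range x) = ⊤} : ℝ) := by
  classical
  have : Fintype G := Fintype.ofFinite G
  have : Fintype {M : Subgroup G // IsCoatom M} := Fintype.ofFinite _
  set N := Nat.card G with hN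
  set r := Nat.card {M : Subgroup G // IsCoatom M} with hr
  set S : Finset (Fin k → G) :=
    Finset.univ.filter (fun x => Subgroup.closure (Set.range x) = ⊤) with hS
  set A : Finset (Fin k → G) :=
    Finset.univ.filter (fun x => ¬ Subgroup.closure (Set.range x) = ⊤) with hA
  have hcardsub :
      Nat.card {x : Fin k → G // Subgroup.closure (Set.range x) = ⊤} = S.card := by
    rw [Nat.card_eq_fintype_card, Fintype.card_subtype]
  have hSA : S.card + A.card = N ^ k := by
    rw [hS, hA, Finset.card_filter_add_card_filter_not, Finset.card_univ,
      Fintype.card_fun]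
    simp [hN, Nat.card_eq_fintype_card]
  -- every non-generating tuple lies in some maximal subgroup
  have hAsub : A ⊆ Finset.univ.biUnion (fun (M : {M : Subgroup G // IsCoatom M}) =>
      Finset.univ.filter (fun x : Fin k → G => ∀ i, x i ∈ M.1)) := by
    intro x hx
    rw [hA, Finset.mem_filter] at hx
    obtain ⟨M, hM, hle⟩ :=
      (eq_top_or_exists_le_coatom (Subgroup.closure (Set.range x))).resolve_left hx.2
    simp only [Finset.mem_biUnion, Finset.mem_filter, Finset.mem_univ, true_and]
    exact ⟨⟨M, hM⟩, fun i => hle (Subgroup.subset_closure ⟨i, rfl⟩)⟩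
  have hBM : ∀ (M : Subgroup G),
      (Finset.univ.filter (fun x : Fin k → G => ∀ i, x i ∈ M)).card = Nat.card M ^ k := by
    intro M
    have h1 : (Finset.univ.filter (fun x : Fin k → G => ∀ i, x i ∈ M)).card
        = Fintype.card {x : Fin k → G // ∀ i, x i ∈ M} := (Fintype.card_subtype _).symm
    rw [h1, Fintype.card_congr (Equiv.subtypePiEquivPi (p := fun _ y => y ∈ M)),
      Fintype.card_pi]
    simp [Nat.card_eq_fintype_card]
  -- each maximal subgroup has index at least 2
  have hhalf : ∀ (M : {M : Subgroup G // IsCoatom M}), 2 * Nat.card M.1 ≤ N := by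
    rintro ⟨M, hM⟩
    have hne : M ≠ ⊤ := hM.1
    have hidx : M.index ≠ 1 := by
      intro h; exact hne (Subgroup.index_eq_one.mp h)
    have hidx0 : M.index ≠ 0 := Subgroup.index_ne_zero_of_finite
    have h2 : 2 ≤ M.index := by omega
    calc 2 * Nat.card M ≤ M.index * Nat.card M := Nat.mul_le_mul_right _ h2
      _ = N := by rw [mul_comm]; exact Subgroup.card_mul_index M
  have hAcard : (A.card : ℝ) ≤ r * ((N : ℝ) / 2) ^ k := by
    calc (A.card : ℝ)
        ≤ ((Finset.univ.biUnion (fun (M : {M : Subgroup G // IsCoatom M}) =>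
            Finset.univ.filter (fun x : Fin k → G => ∀ i, x i ∈ M.1))).card : ℝ) := by
          exact_mod_cast Finset.card_le_card hAsub
      _ ≤ ∑ M : {M : Subgroup G // IsCoatom M},
            ((Finset.univ.filter (fun x : Fin k → G => ∀ i, x i ∈ M.1)).card : ℝ) := by
          exact_mod_cast Finset.card_biUnion_le
      _ ≤ ∑ M : {M : Subgroup G // IsCoatom M}, ((N : ℝ) / 2) ^ k := by
          apply Finset.sum_le_sum
          intro M _
          rw [hBM]
          push_cast
          apply pow_le_pow_left₀ (by positivity)
          have := hhalf M
          have : (2 : ℝ) * (Nat.card M.1 : ℝ) ≤ (N : ℝ) := by exact_mod_cast this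
          linarith
      _ = r * ((N : ℝ) / 2) ^ k := by
          rw [Finset.sum_const, Finset.card_univ, nsmul_eq_mul, hr,
            Nat.card_eq_fintype_card]
  have hScard : ((N : ℝ)) ^ k - (A.card : ℝ) ≤ (S.card : ℝ) := by
    have : (S.card : ℝ) + (A.card : ℝ) = (N : ℝ) ^ k := by exact_mod_cast hSA
    linarith
  have hrk : (r : ℝ) * ((N : ℝ) / 2) ^ k ≤ (N : ℝ) ^ k / 2 := by
    have h2k : (2 : ℝ) * r ≤ 2 ^ k := by exact_mod_cast hk
    have hNk : (0 : ℝ) ≤ (N : ℝ) ^ k := by positivity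
    rw [div_pow, ← mul_div_assoc]
    rw [div_le_div_iff₀ (by positivity) (by norm_num)]
    calc (r : ℝ) * (N : ℝ) ^ k * 2 = (2 * r) * (N : ℝ) ^ k := by ring
      _ ≤ 2 ^ k * (N : ℝ) ^ k := by
          apply mul_le_mul_of_nonneg_right h2k hNk
      _ = (N : ℝ) ^ k * 2 ^ k := by ring
  rw [hcardsub]
  push_cast
  linarith
end
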